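/- Let H be the 3×21 matrix over ℤ/4 with rows (1,0,2,2,0,1,1,1,3,2,1,2,1,1 | 1,0,0,3,0,1,1), (0,1,1,0,2,2,1,2,1,1,3,2,1,0 | 0,1,0,1,3,2,1), (2,2,0,1,1,0,3,2,1,2,1,1,2,3 | 0,0,1,0,1,1,1). Then the additive code C = {c ∈ (ℤ/4)^{21} : H cᵀ = 0} is a 1-perfect code in the Doob graph D(7, 0+7). -/
import Mathlib


open Matrix Polynomial Finset

/-- Vertex set of the Doob graph `D(m, n'+n'')`. -/
abbrev DoobV (m n' n'' : ℕ) : Type :=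
  (Fin (2*m) → ZMod 4) × (Fin (2*n') → ZMod 2) × (Fin n'' → ZMod 4)

/-- Connecting set of the Shrikhande graph as a Cayley graph on `(ℤ/4)²`. -/
def shrGen : Set (ZMod 4 × ZMod 4) :=
  {(0,1), (3,0), (3,3), (0,3), (1,0), (1,1)}

/-- Connecting set of `K₄` as a Cayley graph on `(ℤ/2)²`. -/
def k4Gen : Set (ZMod 2 × ZMod 2) :=
  {(0,1), (1,0), (1,1)}

/-- `e` is a weight-1 element of `DoobV m n' n''`. -/
def IsWeightOne {m n' n'' : ℕ} (e : DoobV m n' n'') : Prop :=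
  (∃ i : Fin m,
    (e.1 ⟨2*i.1, by have := i.2; omega⟩, e.1 ⟨2*i.1+1, by have := i.2; omega⟩) ∈ shrGen ∧
    (∀ j : Fin (2*m), j.1 ≠ 2*i.1 → j.1 ≠ 2*i.1+1 → e.1 j = 0) ∧
    e.2.1 = 0 ∧ e.2.2 = 0) ∨
  (∃ i : Fin n',
    (e.2.1 ⟨2*i.1, by have := i.2; omega⟩, e.2.1 ⟨2*i.1+1, by have := i.2; omega⟩) ∈ k4Gen ∧
    (∀ j : Fin (2*n'), j.1 ≠ 2*i.1 → j.1 ≠ 2*i.1+1 → e.2.1 j = 0) ∧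
    e.1 = 0 ∧ e.2.2 = 0) ∨
  (∃ i : Fin n'',
    e.2.2 i ≠ 0 ∧ (∀ j : Fin n'', j ≠ i → e.2.2 j = 0) ∧
    e.1 = 0 ∧ e.2.1 = 0)

/-- `C` is a 1-perfect code in the Doob graph `D(m, n'+n'')`: every vertex is at graph
distance at most 1 from exactly one element of `C`. -/
def IsPerfectCode {m n' n'' : ℕ} (C : Set (DoobV m n' n'')) : Prop :=
  ∀ v : DoobV m n' n'', ∃! c : DoobV m n' n'', c ∈ C ∧ (v = c ∨ IsWeightOne (v - c))

/-- The coordinatewise homomorphism `ℤ/2 → ℤ/4` sending `1` to `2`. -/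
def z2toZ4 (b : ZMod 2) : ZMod 4 := 2 * (b.val : ZMod 4)

/-- Syndrome of `z` with respect to the check matrix `(A | A' | A'')`:
`A z₁ᵀ + 2·(A' z₂ᵀ) + A'' z₃ᵀ`. -/
def syndrome {k m n' n'' : ℕ}
    (A : Matrix (Fin k) (Fin (2*m)) (ZMod 4))
    (A' : Matrix (Fin k) (Fin (2*n')) (ZMod 2))
    (A'' : Matrix (Fin k) (Fin n'') (ZMod 4))
    (z : DoobV m n' n'') : Fin k → ZMod 4 :=
  A.mulVec z.1 + (fun i => z2toZ4 (A'.mulVec z.2.1 i)) + A''.mulVec z.2.2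

/-- The additive code with check matrix `(A | A' | A'')`. -/
def codeOf {k m n' n'' : ℕ}
    (A : Matrix (Fin k) (Fin (2*m)) (ZMod 4))
    (A' : Matrix (Fin k) (Fin (2*n')) (ZMod 2))
    (A'' : Matrix (Fin k) (Fin n'') (ZMod 4)) : Set (DoobV m n' n'') :=
  {z | syndrome A A' A'' z = 0}

/-- The first 14 columns (the 7 Shrikhande pairs) of the check matrix `H` of the second
additive 1-perfect code in `D(7, 0+7)`. -/
def B1 : Matrix (Fin 3) (Fin (2*7)) (ZMod 4) :=
  !![1,0,2,2,0,1,1,1,3,2,1,2,1,1;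
     0,1,1,0,2,2,1,2,1,1,3,2,1,0;
     2,2,0,1,1,0,3,2,1,2,1,1,2,3]

/-- The (empty) `ℤ/2`-part of the check matrix (`n' = 0`). -/
def B2 : Matrix (Fin 3) (Fin (2*0)) (ZMod 2) := fun _ j => j.elim0

/-- The last 7 columns of the check matrix `H`. -/
def B3 : Matrix (Fin 3) (Fin 7) (ZMod 4) :=
  !![1,0,0,3,0,1,1;
     0,1,0,1,3,2,1;
     0,0,1,0,1,1,1]


section Aux

abbrev KK : Type := Option ((Fin 7 × Fin 6) ⊕ (Fin 7 × Fin 3))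

def shrList : Fin 6 → ZMod 4 × ZMod 4
  | 0 => (0,1) | 1 => (3,0) | 2 => (3,3) | 3 => (0,3) | 4 => (1,0) | 5 => (1,1)

def mkA (i : Fin 7) (p : ZMod 4 × ZMod 4) : DoobV 7 0 7 :=
  (fun j => if (j:ℕ) = 2*i.1 then p.1 else if (j:ℕ) = 2*i.1+1 then p.2 else 0, 0, 0)

def mkB (i : Fin 7) (a : ZMod 4) : DoobV 7 0 7 :=
  (0, 0, fun j => if j = i then a else 0)

def ff : KK → DoobV 7 0 7
  | none => 0
  | some (.inl (i,t)) => mkA i (shrList t)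
  | some (.inr (i,t)) => mkB i ((t:ℕ)+1 : ZMod 4)

def sg (k : KK) : Fin 3 → ZMod 4 := B1.mulVec (ff k).1 + B3.mulVec (ff k).2.2

lemma synd_eq (z : DoobV 7 0 7) :
    syndrome B1 B2 B3 z = B1.mulVec z.1 + B3.mulVec z.2.2 := by
  funext i
  simp [syndrome, Matrix.mulVec, dotProduct, z2toZ4]

lemma synd_sub (v c : DoobV 7 0 7) :
    syndrome B1 B2 B3 (v - c) = syndrome B1 B2 B3 v - syndrome B1 B2 B3 c := by
  simp only [synd_eq, Prod.fst_sub, Prod.snd_sub, Matrix.mulVec_sub]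
  abel

set_option maxRecDepth 10000 in
lemma sg_inj : Function.Injective sg := by decide

lemma sg_bij : Function.Bijective sg :=
  (Fintype.bijective_iff_injective_and_card sg).2 ⟨sg_inj, by decide⟩

lemma shr_exists {p : ZMod 4 × ZMod 4} (hp : p ∈ shrGen) : ∃ t : Fin 6, shrList t = p := by
  simp only [shrGen, Set.mem_insert_iff, Set.mem_singleton_iff] at hp
  rcases hp with h|h|h|h|h|h
  exacts [⟨0, h.symm⟩, ⟨1, h.symm⟩, ⟨2, h.symm⟩, ⟨3, h.symm⟩, ⟨4, h.symm⟩, ⟨5, h.symm⟩]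

lemma z4_exists : ∀ a : ZMod 4, a ≠ 0 → ∃ t : Fin 3, ((t:ℕ)+1 : ZMod 4) = a := by
  decide

lemma mkA_fst1 (i : Fin 7) (p : ZMod 4 × ZMod 4) (h : 2*i.1 < 2*7) :
    (mkA i p).1 ⟨2*i.1, h⟩ = p.1 := by simp [mkA]

lemma mkA_fst2 (i : Fin 7) (p : ZMod 4 × ZMod 4) (h : 2*i.1+1 < 2*7) :
    (mkA i p).1 ⟨2*i.1+1, h⟩ = p.2 := by
  simp only [mkA]
  rw [if_neg (by omega)]
  simp

lemma weight_ff : ∀ k : KK, ff k = 0 ∨ IsWeightOne (ff k) := by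
  rintro (_|(⟨i,t⟩|⟨i,t⟩))
  · exact Or.inl rfl
  · have hff : ff (some (Sum.inl (i,t))) = mkA i (shrList t) := rfl
    rw [hff]
    refine Or.inr (Or.inl ⟨i, ?_, ?_, rfl, rfl⟩)
    · rw [mkA_fst1, mkA_fst2]
      fin_cases t <;> simp [shrList, shrGen]
    · intro j hj1 hj2
      simp [mkA, hj1, hj2]
  · have hff : ff (some (Sum.inr (i,t))) = mkB i ((t:ℕ)+1 : ZMod 4) := rfl
    rw [hff]
    refine Or.inr (Or.inr (Or.inr ⟨i, ?_, ?_, rfl, rfl⟩))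
    · simp only [mkB, if_pos rfl]
      fin_cases t <;> decide
    · intro j hj
      simp [mkB, hj]

lemma cover (e : DoobV 7 0 7) (he : e = 0 ∨ IsWeightOne e) : ∃ k : KK, ff k = e := by
  rcases he with h | (⟨i, hp, hz, h21, h22⟩ | ⟨i, hi⟩ | ⟨i, hne, hz, h1, h21⟩)
  · exact ⟨none, h.symm⟩
  · obtain ⟨t, ht⟩ := shr_exists hp
    refine ⟨some (.inl (i, t)), ?_⟩
    show mkA i (shrList t) = e
    rw [ht]
    refine Prod.ext ?_ (Prod.ext (funext fun j => j.elim0) h22.symm)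
    funext j
    simp only [mkA]
    split_ifs with hA hB
    · have hj : j = (⟨2*i.1, by have := i.2; omega⟩ : Fin (2*7)) := Fin.ext hA
      rw [hj]
    · have hj : j = (⟨2*i.1+1, by have := i.2; omega⟩ : Fin (2*7)) := Fin.ext hB
      rw [hj]
    · exact (hz j hA hB).symm
  · exact i.elim0
  · obtain ⟨t, ht⟩ := z4_exists _ hne
    refine ⟨some (.inr (i, t)), ?_⟩
    show mkB i ((t:ℕ)+1 : ZMod 4) = e
    rw [ht]
    refine Prod.ext h1.symm (Prod.ext h21.symm ?_)
    funext j
    simp only [mkB]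
    split_ifs with h
    · rw [h]
    · exact (hz j h).symm

lemma key (s : Fin 3 → ZMod 4) :
    ∃! e : DoobV 7 0 7, (e = 0 ∨ IsWeightOne e) ∧ syndrome B1 B2 B3 e = s := by
  obtain ⟨k, hk⟩ := sg_bij.surjective s
  refine ⟨ff k, ⟨weight_ff k, by rw [synd_eq]; exact hk⟩, ?_⟩
  rintro e ⟨hw, hs⟩
  obtain ⟨k', hk'⟩ := cover e hw
  have hss : sg k' = sg k := by
    rw [hk]
    show B1.mulVec (ff k').1 + B3.mulVec (ff k').2.2 = s
    rw [← synd_eq, hk', hs]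
  rw [← hk', sg_inj hss]

end Aux

/-- the additive code `{c ∈ (ℤ/4)²¹ : H cᵀ = 0}` with the explicit 3×21
check matrix `H = (B1 | B3)` is a 1-perfect code in the Doob graph `D(7, 0+7)`. -/
theorem statement19 : IsPerfectCode (codeOf B1 B2 B3) := by
  intro v
  obtain ⟨e, ⟨hw, hs⟩, hu⟩ := key (syndrome B1 B2 B3 v)
  refine ⟨v - e, ⟨?_, ?_⟩, ?_⟩
  · show syndrome B1 B2 B3 (v - e) = 0
    rw [synd_sub, hs, sub_self]
  · rcases hw with h0 | hw1
    · left; rw [h0, sub_zero]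
    · right; rwa [sub_sub_cancel]
  · rintro c ⟨hc, hor⟩
    have hwc : v - c = 0 ∨ IsWeightOne (v - c) := by
      rcases hor with h | h
      · left; rw [h, sub_self]
      · right; exact h
    have hsc : syndrome B1 B2 B3 (v - c) = syndrome B1 B2 B3 v := by
      rw [synd_sub, show syndrome B1 B2 B3 c = 0 from hc, sub_zero]
    have h1 := hu (v - c) ⟨hwc, hsc⟩
    have h2 := congrArg (fun x => v - x) h1
    simpa using h2
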